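/- arXiv:0706.2431 — 2 statements merged into one kernel-verified Lean document; each statement's English description precedes it below -/
import Mathlib

section
/- A complete k-partite graph (all parts counted) is cordial if and only if the number of parts with an odd number of vertices is at most three. -/
open Finset

/-- Number of edges of `G` whose induced label (mod-2 sum of endpoint labels) is `c`. -/
def edgeCount {V : Type*} [Fintype V] [DecidableEq V] (G : SimpleGraph V)
    [DecidableRel G.Adj] (f : V → ZMod 2) (c : ZMod 2) : ℕ :=
  (G.edgeFinset.filter fun e =>
    Sym2.lift ⟨fun a b => f a + f b, fun _ _ => add_comm _ _⟩ e = c).card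

instance {ι : Type*} [DecidableEq ι] (V : ι → Type*) :
    DecidableRel (SimpleGraph.completeMultipartiteGraph V).Adj :=
  fun v w => inferInstanceAs (Decidable (v.1 ≠ w.1))

/-!
Label a vertex `v` by the spin `spin (f v) = ±1` and let `dᵢ` be the total spin of part `i`.
The vertex imbalance is `S = ∑ dᵢ`, and twice the edge imbalance is the sum of
`spin u * spin v` over ordered pairs in different parts, i.e. `S² - ∑ dᵢ²`. As `dᵢ ≡ |Vᵢ| (mod 2)`,
each odd part has `dᵢ² ≥ 1`, so a cordial labelling forces `#odd ≤ ∑ dᵢ² ≤ S² + 2 ≤ 3`.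
Conversely, giving even parts spin `0` and odd parts spins `±1` with `|S| ≤ 1` makes the
edge imbalance `(S² - #odd) / 2 ∈ {0, -1}` as soon as `#odd ≤ 3`.
-/

lemma ZMod.ne_zero_iff_eq_one {a : ZMod 2} : a ≠ 0 ↔ a = 1 := by
  revert a; decide

def spin (a : ZMod 2) : ℤ := if a = 0 then 1 else -1

lemma spin_add (a b : ZMod 2) : spin (a + b) = spin a * spin b := by
  unfold spin; revert a b; decide

section Spin
variable {W : Type*} (h : W → ZMod 2)

lemma sum_spin_eq (s : Finset W) :
    ∑ x ∈ s, spin (h x) = (#{x ∈ s | h x = 0} : ℤ) - #{x ∈ s | h x = 1} := by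
  simp only [spin, sum_ite, sum_const, nsmul_eq_mul, mul_one, mul_neg, ZMod.ne_zero_iff_eq_one]
  ring

variable [Fintype W]

lemma sum_spin_eq_card_sub_two_mul :
    ∑ x, spin (h x) = (Fintype.card W : ℤ) - 2 * #{x | h x = 1} := by
  have hcard := card_filter_add_card_filter_not (s := univ) (fun x => h x = 0)
  simp only [ZMod.ne_zero_iff_eq_one, card_univ] at hcard
  rw [sum_spin_eq]
  omega

lemma odd_sum_spin_iff : Odd (∑ x, spin (h x)) ↔ Odd (Fintype.card W) := by
  rw [sum_spin_eq_card_sub_two_mul, Int.odd_iff, Nat.odd_iff]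
  omega

end Spin

lemma exists_sum_spin_eq (W : Type*) [Fintype W] {e : ℤ} (he : |e| ≤ Fintype.card W)
    (hpar : Even (Fintype.card W + e)) : ∃ h : W → ZMod 2, ∑ x, spin (h x) = e := by
  classical
  obtain ⟨m, hm⟩ := hpar
  rw [abs_le] at he
  obtain ⟨s, -, hs⟩ := exists_subset_card_eq (s := (univ : Finset W))
    (n := (Fintype.card W - m).toNat) (by rw [card_univ]; omega)
  refine ⟨fun x => if x ∈ s then 1 else 0, ?_⟩
  rw [sum_spin_eq_card_sub_two_mul, filter_congr (q := (· ∈ s)) (by simp), filter_mem_eq_inter,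
    univ_inter, hs]
  omega

lemma sum_sigma_fst_ne_mul {ι : Type*} [Fintype ι] [DecidableEq ι] {V : ι → Type*}
    [∀ i, Fintype (V i)] {R : Type*} [CommRing R] (x : (Σ i, V i) → R) :
    ∑ u, ∑ v with u.1 ≠ v.1, x u * x v = (∑ u, x u) ^ 2 - ∑ i, (∑ y, x ⟨i, y⟩) ^ 2 := by
  have fiber : ∀ u : Σ i, V i, ∑ v with u.1 = v.1, x v = ∑ y, x ⟨u.1, y⟩ := by
    intro u
    rw [sum_filter, Fintype.sum_sigma, Fintype.sum_eq_single u.1 (fun j hj => by simp [Ne.symm hj])]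
    simp
  have split : ∀ u : Σ i, V i,
      ∑ v with u.1 ≠ v.1, x v = ∑ v, x v - ∑ y, x ⟨u.1, y⟩ := fun u => by
    rw [← fiber, eq_sub_iff_add_eq, add_comm]
    exact sum_filter_add_sum_filter_not _ _ _
  calc ∑ u, ∑ v with u.1 ≠ v.1, x u * x v
      = ∑ u, x u * ∑ v, x v - ∑ u, x u * ∑ y, x ⟨u.1, y⟩ := by
        simp only [← mul_sum, split, mul_sub, sum_sub_distrib]
    _ = (∑ u, x u) ^ 2 - ∑ i, (∑ y, x ⟨i, y⟩) ^ 2 := by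
        rw [← sum_mul, ← sq, Fintype.sum_sigma (fun u => x u * ∑ y, x ⟨u.1, y⟩)]
        simp only [sq, sum_mul]

lemma exists_signs_sum_abs_le_one {ι : Type*} [Fintype ι] [DecidableEq ι] (s : Finset ι) :
    ∃ d : ι → ℤ, (∀ i ∈ s, d i = 1 ∨ d i = -1) ∧ (∀ i ∉ s, d i = 0) ∧ |∑ i, d i| ≤ 1 := by
  induction s using Finset.induction_on with
  | empty => exact ⟨0, by simp⟩
  | insert a s ha ih =>
    obtain ⟨d, hs, hns, hsum⟩ := ih
    set v : ℤ := if ∑ i, d i ≤ 0 then 1 else -1 with hv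
    have hv' : v = 1 ∨ v = -1 := by split_ifs at hv <;> simp [hv]
    refine ⟨d + Pi.single a v, fun i hi => ?_, fun i hi => ?_, ?_⟩
    · rcases eq_or_ne i a with rfl | hia
      · simpa [hns i ha] using hv'
      · simpa [hia] using hs i ((mem_insert.1 hi).resolve_left hia)
    · rw [mem_insert, not_or] at hi
      simp [hns i hi.2, hi.1]
    · simp only [Pi.add_apply, sum_add_distrib, Fintype.sum_pi_single']
      rw [abs_le] at hsum ⊢
      split_ifs at hv <;> omega

lemma card_filter_odd_le_sum_sq {ι : Type*} (s : Finset ι) (d : ι → ℤ) :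
    (#{i ∈ s | Odd (d i)} : ℤ) ≤ ∑ i ∈ s, d i ^ 2 := by
  rw [card_filter, Nat.cast_sum]
  refine sum_le_sum fun i _ => ?_
  split_ifs with h
  · have : d i ≠ 0 := by rw [Int.odd_iff] at h; omega
    exact_mod_cast (one_le_sq_iff_one_le_abs _).2 (Int.one_le_abs this)
  · simp only [Nat.cast_zero]
    positivity

section Graph
variable {V : Type*} [Fintype V] [DecidableEq V] (G : SimpleGraph V) [DecidableRel G.Adj]
  (f : V → ZMod 2)

lemma two_mul_edgeCount (c : ZMod 2) :
    2 * edgeCount G f c = #{p : V × V | G.Adj p.1 p.2 ∧ f p.1 + f p.2 = c} := by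
  let H : SimpleGraph V :=
    { Adj u v := G.Adj u v ∧ f u + f v = c
      symm := ⟨fun _ _ h => ⟨h.1.symm, add_comm (f _) (f _) ▸ h.2⟩⟩
      loopless := ⟨fun _ h => G.irrefl h.1⟩ }
  have : edgeCount G f c = #H.edgeFinset := by
    unfold edgeCount
    congr 1
    ext e
    induction e with | _ u v => simp [H, and_comm]
  rw [this, SimpleGraph.two_mul_card_edgeFinset]

lemma two_mul_edgeCount_sub :
    2 * ((edgeCount G f 0 : ℤ) - edgeCount G f 1)
      = ∑ u, ∑ v with G.Adj u v, spin (f u) * spin (f v) := by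
  simp only [← spin_add, sum_filter, ← Fintype.sum_prod_type']
  rw [← sum_filter, sum_spin_eq, filter_filter, filter_filter, mul_sub, ← Nat.cast_ofNat,
    ← Nat.cast_mul, ← Nat.cast_mul, two_mul_edgeCount, two_mul_edgeCount]

end Graph

section Multipartite
variable {ι : Type*} (V : ι → Type*) [∀ i, Fintype (V i)]

def partSpin (f : (Σ i, V i) → ZMod 2) (i : ι) : ℤ := ∑ y, spin (f ⟨i, y⟩)

lemma exists_partSpin_eq (d : ι → ℤ) (hle : ∀ i, |d i| ≤ Fintype.card (V i))
    (hpar : ∀ i, Even (Fintype.card (V i) + d i)) : ∃ f, partSpin V f = d := by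
  choose g hg using fun i => exists_sum_spin_eq (V i) (hle i) (hpar i)
  exact ⟨fun v => g v.1 v.2, funext hg⟩

variable [Fintype ι]

lemma exists_abs_sum_partSpin_le_one_and_sum_sq_eq [DecidableEq ι] :
    ∃ f, |∑ i, partSpin V f i| ≤ 1 ∧
      ∑ i, partSpin V f i ^ 2 = #{i | Odd (Fintype.card (V i))} := by
  obtain ⟨d, hodd, heven, hsum⟩ := exists_signs_sum_abs_le_one {i | Odd (Fintype.card (V i))}
  have hle : ∀ i, |d i| ≤ Fintype.card (V i) ∧ Even (Fintype.card (V i) + d i) := by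
    intro i
    by_cases hi : Odd (Fintype.card (V i))
    · obtain ⟨m, hm⟩ := id hi
      rcases hodd i (by simpa using hi) with h | h <;> simp [h, hm, parity_simps]
    · rw [heven i (by simpa using hi)]
      simpa using hi
  obtain ⟨f, rfl⟩ := exists_partSpin_eq V d (fun i => (hle i).1) (fun i => (hle i).2)
  refine ⟨f, hsum, ?_⟩
  rw [card_eq_sum_ones, sum_filter, Nat.cast_sum]
  refine sum_congr rfl fun i _ => ?_
  split_ifs with hi
  · rcases hodd i (by simpa using hi) with h | h <;> simp [h]
  · simp [heven i (by simpa using hi)]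

variable (f : (Σ i, V i) → ZMod 2)

lemma card_filter_odd_card_le_sum_sq_partSpin :
    (#{i | Odd (Fintype.card (V i))} : ℤ) ≤ ∑ i, partSpin V f i ^ 2 := by
  simpa only [partSpin, odd_sum_spin_iff] using card_filter_odd_le_sum_sq univ (partSpin V f)

lemma sum_partSpin : ∑ i, partSpin V f i = ∑ v, spin (f v) :=
  (Fintype.sum_sigma fun v => spin (f v)).symm

lemma card_zero_sub_card_one_eq_sum_partSpin :
    (#{v | f v = 0} : ℤ) - #{v | f v = 1} = ∑ i, partSpin V f i := by
  rw [sum_partSpin, sum_spin_eq]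

variable [DecidableEq ι] [∀ i, DecidableEq (V i)]

lemma two_mul_edgeCount_sub_eq_partSpin :
    2 * ((edgeCount (SimpleGraph.completeMultipartiteGraph V) f 0 : ℤ)
        - edgeCount (SimpleGraph.completeMultipartiteGraph V) f 1)
      = (∑ i, partSpin V f i) ^ 2 - ∑ i, partSpin V f i ^ 2 := by
  rw [two_mul_edgeCount_sub, sum_partSpin]
  exact sum_sigma_fst_ne_mul (fun v => spin (f v))

end Multipartite

theorem complete_multipartite_cordial_iff_general
    {ι : Type*} [Fintype ι] [DecidableEq ι] (V : ι → Type*)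
    [∀ i, Fintype (V i)] [∀ i, DecidableEq (V i)] :
    (∃ f : (Σ i, V i) → ZMod 2,
      |((Finset.univ.filter fun v : Σ i, V i => f v = 0).card : ℤ)
        - ((Finset.univ.filter fun v : Σ i, V i => f v = 1).card : ℤ)| ≤ 1 ∧
      |(edgeCount (SimpleGraph.completeMultipartiteGraph V) f 0 : ℤ)
        - (edgeCount (SimpleGraph.completeMultipartiteGraph V) f 1 : ℤ)| ≤ 1)
    ↔ (Finset.univ.filter fun i => Odd (Fintype.card (V i))).card ≤ 3 := by
  simp only [card_zero_sub_card_one_eq_sum_partSpin]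
  constructor
  · rintro ⟨f, hvert, hedge⟩
    have hE := two_mul_edgeCount_sub_eq_partSpin V f
    have hodd := card_filter_odd_card_le_sum_sq_partSpin V f
    have hS := (sq_le_one_iff_abs_le_one _).2 hvert
    rw [abs_le] at hedge
    zify
    linarith
  · intro h3
    obtain ⟨f, hsum, hsq⟩ := exists_abs_sum_partSpin_le_one_and_sum_sq_eq V
    refine ⟨f, hsum, ?_⟩
    have hE := two_mul_edgeCount_sub_eq_partSpin V f
    have hS := (sq_le_one_iff_abs_le_one _).2 hsum
    rw [hsq] at hE
    rw [abs_le]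
    constructor <;> nlinarith [sq_nonneg (∑ i, partSpin V f i)]

theorem complete_multipartite_cordial_iff
    {ι : Type*} [Fintype ι] [DecidableEq ι] (V : ι → Type*)
    [∀ i, Fintype (V i)] [∀ i, DecidableEq (V i)] [∀ i, Nonempty (V i)] :
    (∃ f : (Σ i, V i) → ZMod 2,
      |((Finset.univ.filter fun v : Σ i, V i => f v = 0).card : ℤ)
        - ((Finset.univ.filter fun v : Σ i, V i => f v = 1).card : ℤ)| ≤ 1 ∧
      |(edgeCount (SimpleGraph.completeMultipartiteGraph V) f 0 : ℤ)
        - (edgeCount (SimpleGraph.completeMultipartiteGraph V) f 1 : ℤ)| ≤ 1)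
    ↔ (Finset.univ.filter fun i => Odd (Fintype.card (V i))).card ≤ 3 :=
  complete_multipartite_cordial_iff_general V
end

section
/- If G is a complete multipartite graph with n ≥ 1 odd parts, and n = j² + δ for some positive integer j and δ ∈ {-2, 0, 2}, then the cordial vertex deficiency of G is at most j - 1: there exists a binary labeling of G with edge-label counts roughly equal whose vertex-label counts differ by at most j. -/
open Finset

/-!
Give label `c` the weight `(-1)^c`. Then the difference between the numbers of `0`- and
`1`-labelled vertices is the total weight `s = ∑ᵢ sᵢ`, where `sᵢ` is the weight of part `i`,
and since an edge label is the sum of its end labels, twice the corresponding difference for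
edges is `s² - ∑ᵢ sᵢ²`. Label each part alternately, so that `sᵢ = 0` on even parts and
`sᵢ = ±1` on odd ones, with `-1` on exactly `t` odd parts, where `n = j + 2t` (possible since
`j ≤ n` and `j² ≡ j (mod 2)`). Then `s = j`, `∑ᵢ sᵢ² = n`, and the edge difference is
`(j² - n) / 2 = -δ / 2 ∈ {-1, 0, 1}`.
-/

def labelSign (c : ZMod 2) : ℤ := (-1) ^ c.val

lemma labelSign_add (a b : ZMod 2) : labelSign (a + b) = labelSign a * labelSign b := by
  revert a b; decide

lemma labelSign_sq (c : ZMod 2) : labelSign c ^ 2 = 1 := by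
  revert c; decide

lemma labelSign_natCast (r : ℕ) : labelSign r = (-1) ^ r := by
  rw [labelSign, ZMod.val_natCast, ← neg_one_pow_eq_pow_mod_two]

lemma labelSign_sym2_lift_add {V : Type*} (f : V → ZMod 2) (e : Sym2 V) :
    labelSign (Sym2.lift ⟨fun a b => f a + f b, fun _ _ => add_comm _ _⟩ e) =
      Sym2.lift ⟨fun a b => labelSign (f a) * labelSign (f b), fun _ _ => mul_comm _ _⟩ e := by
  induction e using Sym2.ind
  simp [labelSign_add]

lemma natCast_card_filter_eq_zero_sub_card_filter_eq_one {α : Type*} (s : Finset α)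
    (F : α → ZMod 2) :
    (#{a ∈ s | F a = 0} : ℤ) - #{a ∈ s | F a = 1} = ∑ a ∈ s, labelSign (F a) := by
  rw [natCast_card_filter, natCast_card_filter, ← sum_sub_distrib]
  refine sum_congr rfl fun a _ => ?_
  generalize F a = c
  revert c; decide

namespace SimpleGraph

variable {V : Type*} [Fintype V] [DecidableEq V] (G : SimpleGraph V) [DecidableRel G.Adj]

lemma sum_darts_edge {M : Type*} [AddCommMonoid M] (w : Sym2 V → M) :
    ∑ d : G.Dart, w d.edge = 2 • ∑ e ∈ G.edgeFinset, w e := by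
  rw [← sum_fiberwise_of_maps_to (t := G.edgeFinset) (g := Dart.edge)
    (fun d _ => by simp), smul_sum]
  refine sum_congr rfl fun e he => ?_
  rw [sum_congr rfl fun d hd => congrArg w (mem_filter.1 hd).2, sum_const,
    G.dart_edge_fiber_card e (mem_edgeFinset.1 he)]

lemma two_nsmul_sum_edgeFinset {M : Type*} [AddCommMonoid M] (w : Sym2 V → M) :
    2 • ∑ e ∈ G.edgeFinset, w e = ∑ p : V × V with G.Adj p.1 p.2, w s(p.1, p.2) := by
  rw [← sum_darts_edge]
  refine sum_bij' (fun d _ ↦ d.toProd) (fun p h ↦ ⟨p, (mem_filter.1 h).2⟩) ?_ ?_ ?_ ?_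
    fun _ _ ↦ rfl <;> simp

end SimpleGraph

lemma sum_sigma_ite_fst_eq {ι : Type*} [Fintype ι] [DecidableEq ι] {V : ι → Type*}
    [∀ i, Fintype (V i)] {R : Type*} [AddCommMonoid R] (g : (Σ i, V i) → R) (i : ι) :
    ∑ v : Σ i, V i, (if i = v.1 then g v else 0) = ∑ x, g ⟨i, x⟩ := by
  rw [Fintype.sum_sigma, sum_eq_single i (fun k _ hk => by simp [Ne.symm hk]) (by simp)]
  simp

lemma two_mul_sum_edgeFinset_completeMultipartiteGraph {ι : Type*} [Fintype ι] [DecidableEq ι]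
    {V : ι → Type*} [∀ i, Fintype (V i)] [∀ i, DecidableEq (V i)] {R : Type*} [CommRing R]
    (g : (Σ i, V i) → R) :
    2 * ∑ e ∈ (SimpleGraph.completeMultipartiteGraph V).edgeFinset,
        Sym2.lift ⟨fun a b => g a * g b, fun _ _ => mul_comm _ _⟩ e =
      (∑ v, g v) ^ 2 - ∑ i, (∑ x, g ⟨i, x⟩) ^ 2 := by
  have h_all : ∑ p : (Σ i, V i) × (Σ i, V i), g p.1 * g p.2 = (∑ v, g v) ^ 2 := by
    rw [sq, sum_mul_sum, Fintype.sum_prod_type]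
  have h_same : ∑ p : (Σ i, V i) × (Σ i, V i) with p.1.1 = p.2.1, g p.1 * g p.2 =
      ∑ i, (∑ x, g ⟨i, x⟩) ^ 2 := by
    simp only [sum_filter, Fintype.sum_prod_type, ← mul_sum, sum_sigma_ite_fst_eq,
      Fintype.sum_sigma (fun v => g v * _)]
    exact sum_congr rfl fun i _ => by rw [sq, sum_mul]
  rw [two_mul, ← two_nsmul, SimpleGraph.two_nsmul_sum_edgeFinset, ← h_all, ← h_same,
    eq_sub_iff_add_eq]
  exact sum_filter_not_add_sum_filter _ _ _

lemma exists_sum_labelSign_eq_ite_odd (α : Type*) [Fintype α] :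
    ∃ g : α → ZMod 2, ∑ x, labelSign (g x) = if Odd (Fintype.card α) then 1 else 0 := by
  refine ⟨fun x => ((Fintype.equivFin α x : ℕ) : ZMod 2), ?_⟩
  rw [Fintype.sum_equiv (Fintype.equivFin α) _ (fun r => (-1 : ℤ) ^ (r : ℕ))
      (fun x => labelSign_natCast _), Fin.sum_univ_eq_sum_range (fun r => (-1 : ℤ) ^ r),
    neg_one_geom_sum]
  simp only [← Nat.not_odd_iff_even, ite_not]

lemma exists_sum_labelSign_sigma_eq {ι : Type*} (V : ι → Type*) [∀ i, Fintype (V i)]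
    (σ : ι → ZMod 2) :
    ∃ f : (Σ i, V i) → ZMod 2, ∀ i,
      ∑ x, labelSign (f ⟨i, x⟩) = if Odd (Fintype.card (V i)) then labelSign (σ i) else 0 := by
  choose g hg using fun i => exists_sum_labelSign_eq_ite_odd (V i)
  refine ⟨fun v => g v.1 v.2 + σ v.1, fun i => ?_⟩
  simp only [labelSign_add, ← sum_mul, hg]
  split_ifs <;> simp

lemma exists_sum_labelSign_eq_card_sub {ι : Type*} [DecidableEq ι] (s : Finset ι) (k : ℕ)
    (hk : k ≤ #s) : ∃ σ : ι → ZMod 2, ∑ i ∈ s, labelSign (σ i) = #s - 2 * k := by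
  obtain ⟨T, hTs, rfl⟩ := exists_subset_card_eq hk
  set σ : ι → ZMod 2 := fun i => if i ∈ T then 1 else 0
  have h_out : ∀ i ∈ s \ T, labelSign (σ i) = 1 := fun i hi => by
    simp [σ, (mem_sdiff.1 hi).2, labelSign]
  have h_in : ∀ i ∈ T, labelSign (σ i) = -1 := fun i hi => by
    simp [σ, hi, labelSign, ZMod.val_one]
  refine ⟨σ, ?_⟩
  rw [← sum_sdiff hTs, sum_congr rfl h_out, sum_congr rfl h_in]
  simp only [sum_const, card_sdiff_of_subset hTs, Int.nsmul_eq_mul, mul_one]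
  omega

lemma exists_two_mul_add_eq_of_eq_sq_add {n j : ℕ} {δ : ℤ} (hδ : δ = -2 ∨ δ = 0 ∨ δ = 2)
    (h : (n : ℤ) = j ^ 2 + δ) : ∃ t, 2 * t + j = n := by
  have h_le : (j : ℤ) ≤ n := by
    rcases j with _ | _ | j <;> rcases hδ with rfl | rfl | rfl <;> push_cast at h ⊢ <;> nlinarith
  obtain ⟨k, hk⟩ := Int.even_mul_pred_self j
  have h_diff : (n : ℤ) - j = 2 * k + δ := by linear_combination h + hk
  exact ⟨(n - j) / 2, by omega⟩

theorem cvd_complete_multipartite_upper_bound_general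
    {ι : Type*} [Fintype ι] [DecidableEq ι] (V : ι → Type*)
    [∀ i, Fintype (V i)] [∀ i, DecidableEq (V i)]
    (n : ℕ) (hn : n = (Finset.univ.filter fun i => Odd (Fintype.card (V i))).card)
    (j : ℕ) (δ : ℤ)
    (hδ : δ = -2 ∨ δ = 0 ∨ δ = 2) (hnj : (n : ℤ) = (j : ℤ) ^ 2 + δ) :
    ∃ f : (Σ i, V i) → ZMod 2,
      |(edgeCount (SimpleGraph.completeMultipartiteGraph V) f 0 : ℤ)
        - (edgeCount (SimpleGraph.completeMultipartiteGraph V) f 1 : ℤ)| ≤ 1 ∧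
      |((Finset.univ.filter fun v : Σ i, V i => f v = 0).card : ℤ)
        - ((Finset.univ.filter fun v : Σ i, V i => f v = 1).card : ℤ)| ≤ (j : ℤ) := by
  obtain ⟨t, ht⟩ := exists_two_mul_add_eq_of_eq_sq_add hδ hnj
  obtain ⟨σ, hσ⟩ := exists_sum_labelSign_eq_card_sub
    (univ.filter fun i => Odd (Fintype.card (V i))) t (by omega)
  obtain ⟨f, hf⟩ := exists_sum_labelSign_sigma_eq V σ
  have h_vert : ∑ v, labelSign (f v) = j := by
    simp only [Fintype.sum_sigma, hf]
    rw [← sum_filter, hσ, ← hn]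
    omega
  have h_parts : ∑ i, (∑ x, labelSign (f ⟨i, x⟩)) ^ 2 = n := by
    simp [hf, ite_pow, labelSign_sq, hn]
  refine ⟨f, ?_, ?_⟩
  · have h_edge := two_mul_sum_edgeFinset_completeMultipartiteGraph (fun v => labelSign (f v))
    rw [h_vert, h_parts, ← sum_congr rfl fun e _ => labelSign_sym2_lift_add f e,
      ← natCast_card_filter_eq_zero_sub_card_filter_eq_one, hnj] at h_edge
    rw [edgeCount, edgeCount, abs_le]
    rcases hδ with rfl | rfl | rfl <;> constructor <;> linarith
  · rw [natCast_card_filter_eq_zero_sub_card_filter_eq_one, h_vert, abs_of_nonneg (by positivity)]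

theorem cvd_complete_multipartite_upper_bound
    {ι : Type*} [Fintype ι] [DecidableEq ι] (V : ι → Type*)
    [∀ i, Fintype (V i)] [∀ i, DecidableEq (V i)] [∀ i, Nonempty (V i)]
    (n : ℕ) (hn : n = (Finset.univ.filter fun i => Odd (Fintype.card (V i))).card)
    (hn1 : 1 ≤ n) (j : ℕ) (hj : 0 < j) (δ : ℤ)
    (hδ : δ = -2 ∨ δ = 0 ∨ δ = 2) (hnj : (n : ℤ) = (j : ℤ) ^ 2 + δ) :
    ∃ f : (Σ i, V i) → ZMod 2,
      |(edgeCount (SimpleGraph.completeMultipartiteGraph V) f 0 : ℤ)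
        - (edgeCount (SimpleGraph.completeMultipartiteGraph V) f 1 : ℤ)| ≤ 1 ∧
      |((Finset.univ.filter fun v : Σ i, V i => f v = 0).card : ℤ)
        - ((Finset.univ.filter fun v : Σ i, V i => f v = 1).card : ℤ)| ≤ (j : ℤ) :=
  cvd_complete_multipartite_upper_bound_general V n hn j δ hδ hnj
end
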